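/- Let R be a Noetherian ring and M an Artinian R-module. For any prime p, the set of attached primes of the co-localization Hom_R(R_p, M) as an R_p-module equals {qR_p | q ∈ Att_R(M), q ⊆ p}. -/

import Mathlib

/-- `p` is an attached prime of `M` iff `p` is prime and is the annihilator of some quotient
of `M`. -/
def IsAttachedPrime (R : Type*) [CommRing R] (M : Type*) [AddCommGroup M] [Module R M]
    (p : Ideal R) : Prop :=
  p.IsPrime ∧ ∃ N : Submodule R M, Module.annihilator R (M ⧸ N) = p

section

variable {R : Type*} [CommRing R] {M : Type*} [AddCommGroup M] [Module R M]
  (p : Ideal R) [p.IsPrime]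

/-- The `R_p`-module structure on the co-localization `Hom_R(R_p, M)`, where `a ∈ R_p` acts by
precomposition with multiplication by `a`. -/
noncomputable instance colocalizationModule :
    Module (Localization.AtPrime p) (Localization.AtPrime p →ₗ[R] M) where
  smul a f := f.comp (LinearMap.mulLeft R a)
  one_smul f := LinearMap.ext fun y => by show f (1 * y) = f y; rw [one_mul]
  mul_smul a b f := LinearMap.ext fun y => by
    show f (a * b * y) = f (b * (a * y)); congr 1; ring
  smul_zero a := LinearMap.ext fun y => rfl
  smul_add a f g := LinearMap.ext fun y => rfl
  add_smul a b f := LinearMap.ext fun y => by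
    show f ((a + b) * y) = f (a * y) + f (b * y); rw [add_mul, map_add]
  zero_smul f := LinearMap.ext fun y => by
    show f (0 * y) = 0; rw [zero_mul, map_zero]

end

/-!
Write `M = L₁ + ⋯ + Lₙ` as an irredundant sum of secondary submodules, `qᵢ = √(ann Lᵢ)`.
An Artinian module is linearly compact, so `Hom_R(R_p, -)` preserves surjections out of `M`
(a Zorn argument on compatible families of cosets). Hence `Hom_R(R_p, M) = Σ Hom_R(R_p, Lᵢ)`,
where `Hom_R(R_p, Lᵢ)` vanishes if `qᵢ ⊄ p` and is `qᵢR_p`-secondary if `qᵢ ⊆ p`. When a finite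
sum of submodules has prime annihilator, that prime is the annihilator of one summand; applied
to quotients of `M` and of `Hom_R(R_p, M)`, this gives both inclusions. Noetherianity makes each
`qᵢ` attached: `qᵢᵏ` kills `Lᵢ`, so `M ⧸ (Σ_{j ≠ i} Lⱼ + qᵢM)` is nonzero with annihilator `qᵢ`.
-/

open scoped Pointwise

namespace Submodule

variable {R M M' : Type*} [CommRing R] [AddCommGroup M] [Module R M] [AddCommGroup M'] [Module R M']

def IsSecondary (L : Submodule R M) : Prop :=
  L ≠ ⊥ ∧ ∀ a : R, a • L = L ∨ a ∈ L.annihilator.radical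

variable {L : Submodule R M}

theorem pow_smul_eq_self {a : R} (h : a • L = L) (n : ℕ) : a ^ n • L = L := by
  induction n with
  | zero => rw [pow_zero, one_smul]
  | succ n ih => rw [pow_succ, mul_smul, h, ih]

theorem IsSecondary.mem_radical_annihilator_iff (hL : L.IsSecondary) {a : R} :
    a ∈ L.annihilator.radical ↔ a • L ≠ L := by
  refine ⟨fun ⟨n, hn⟩ h => hL.1 (eq_bot_iff.2 fun x hx => ?_), (hL.2 a).resolve_left⟩
  rw [← pow_smul_eq_self h n, mem_smul_pointwise_iff_exists] at hx
  obtain ⟨y, hy, rfl⟩ := hx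
  exact (mem_annihilator.1 hn y hy).symm ▸ zero_mem ⊥

theorem IsSecondary.isPrime (hL : L.IsSecondary) : L.annihilator.radical.IsPrime := by
  refine Ideal.isPrime_iff.2 ⟨fun h => ?_, fun {a b} hab => ?_⟩
  · exact hL.mem_radical_annihilator_iff.1 (h ▸ Submodule.mem_top (x := 1)) (one_smul R L)
  · by_contra! h
    rw [hL.mem_radical_annihilator_iff, hL.mem_radical_annihilator_iff, not_not,
      not_not] at h
    exact hL.mem_radical_annihilator_iff.1 hab (by rw [mul_smul, h.2, h.1])

theorem radical_annihilator_le_map (f : M →ₗ[R] M') :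
    L.annihilator.radical ≤ (L.map f).annihilator.radical :=
  Ideal.radical_mono fun a ha => mem_annihilator.2 fun _ ⟨x, hx, hfx⟩ => by
    rw [← hfx, ← map_smul, mem_annihilator.1 ha x hx, map_zero]

theorem IsSecondary.map (hL : L.IsSecondary) (f : M →ₗ[R] M') (hf : L.map f ≠ ⊥) :
    (L.map f).IsSecondary :=
  ⟨hf, fun a => (hL.2 a).imp (fun h => by rw [← map_pointwise_smul, h])
    (radical_annihilator_le_map f ·)⟩

theorem IsSecondary.radical_annihilator_map (hL : L.IsSecondary) (f : M →ₗ[R] M')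
    (hf : L.map f ≠ ⊥) : (L.map f).annihilator.radical = L.annihilator.radical := by
  refine le_antisymm (fun a ha => ?_) (radical_annihilator_le_map f)
  rw [hL.mem_radical_annihilator_iff]
  intro h
  exact (hL.map f hf).mem_radical_annihilator_iff.1 ha (by rw [← map_pointwise_smul, h])

theorem _root_.SupIrred.isSecondary [IsArtinian R M] (hL : SupIrred L) : L.IsSecondary := by
  refine ⟨hL.ne_bot, fun a => ?_⟩
  let f := algebraMap R (Module.End R L) a
  obtain ⟨n, hn⟩ := Filter.eventually_atTop.1 (LinearMap.eventually_codisjoint_ker_pow_range_pow f)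
  have hf : ∀ k x, (f ^ k) x = a ^ k • x := fun k x => by
    rw [← map_pow, Module.algebraMap_end_apply]
  have hsup := congrArg (map L.subtype) (codisjoint_iff.1 (hn (n + 1) (by omega)))
  rw [map_sup, map_subtype_top] at hsup
  rcases hL.2 hsup with hker | hrange
  · right
    refine ⟨n + 1, mem_annihilator.2 fun x hx => ?_⟩
    rw [← hker] at hx
    obtain ⟨y, hy, rfl⟩ := hx
    have hy : a ^ (n + 1) • y = 0 := by rw [← hf]; exact hy
    rw [subtype_apply, ← coe_smul, hy, ZeroMemClass.coe_zero]
  · left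
    refine le_antisymm (smul_le_self_of_tower a L) fun x hx => ?_
    rw [← hrange] at hx
    obtain ⟨_, ⟨y, rfl⟩, rfl⟩ := hx
    rw [mem_smul_pointwise_iff_exists]
    refine ⟨a ^ n • (y : M), L.smul_mem _ y.2, ?_⟩
    rw [subtype_apply, hf, coe_smul, pow_succ', mul_smul]

theorem exists_isSecondary_finset_sup_eq [IsArtinian R M] (N : Submodule R M) :
    ∃ s : Finset (Submodule R M), s.sup id = N ∧ ∀ L ∈ s, L.IsSecondary := by
  obtain ⟨s, hs, hirr⟩ := exists_supIrred_decomposition N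
  exact ⟨s, hs, fun L hL => (hirr hL).isSecondary⟩

theorem exists_irredundant_isSecondary_finset_sup_eq [IsArtinian R M] (N : Submodule R M) :
    ∃ s : Finset (Submodule R M), s.sup id = N ∧ (∀ L ∈ s, L.IsSecondary) ∧
      ∀ L ∈ s, (s.erase L).sup id ≠ N := by
  classical
  obtain ⟨s, ⟨hs, hsec⟩, hmin⟩ := WellFounded.has_min wellFounded_lt
    {s : Finset (Submodule R M) | s.sup id = N ∧ ∀ L ∈ s, L.IsSecondary}
    (exists_isSecondary_finset_sup_eq N)
  exact ⟨s, hs, hsec, fun L hL h => hmin _ ⟨h, fun K hK => hsec K (Finset.mem_of_mem_erase hK)⟩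
    (Finset.erase_ssubset hL)⟩

theorem exists_annihilator_eq_of_finset_sup_eq_top {ι : Type*} {s : Finset ι}
    {K : ι → Submodule R M} (hK : s.sup K = ⊤) (hP : (Module.annihilator R M).IsPrime) :
    ∃ i ∈ s, (K i).annihilator = Module.annihilator R M := by
  have hinf : s.inf (fun i => (K i).annihilator) ≤ Module.annihilator R M := by
    rw [← annihilator_top, ← hK, Finset.sup_eq_iSup, Finset.inf_eq_iInf, annihilator_iSup]
    simp only [annihilator_iSup, le_refl]
  obtain ⟨i, hi, hle⟩ := hP.inf_le'.1 hinf
  exact ⟨i, hi, le_antisymm hle (annihilator_top (R := R) (M := M) ▸ annihilator_mono le_top)⟩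

theorem exists_isSecondary_radical_annihilator_eq [IsArtinian R M] {N : Submodule R M}
    (hP : (Module.annihilator R (M ⧸ N)).IsPrime) :
    ∃ L : Submodule R M, L.IsSecondary ∧ ¬L ≤ N ∧
      L.annihilator.radical = Module.annihilator R (M ⧸ N) := by
  obtain ⟨s, hs, hsec⟩ := exists_isSecondary_finset_sup_eq (⊤ : Submodule R M)
  have hK : s.sup (fun L => L.map N.mkQ) = ⊤ := by
    have := Finset.apply_sup_eq_sup_comp (s := s) (f := id) (map N.mkQ)
      (fun _ _ => Submodule.map_sup _ _ _) (map_bot _)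
    rw [hs, Submodule.map_top, range_mkQ] at this
    exact this.symm
  obtain ⟨L, hLs, hL⟩ := exists_annihilator_eq_of_finset_sup_eq_top hK hP
  have hne : L.map N.mkQ ≠ ⊥ := fun h => hP.ne_top (by rw [← hL, h, annihilator_bot])
  refine ⟨L, hsec L hLs, fun hLN => hne ?_, ?_⟩
  · rw [eq_bot_iff, map_le_iff_le_comap, comap_bot, ker_mkQ]
    exact hLN
  · rw [← (hsec L hLs).radical_annihilator_map N.mkQ hne, hL, hP.radical]

end Submodule

section Attached

variable {R M M' : Type*} [CommRing R] [AddCommGroup M] [Module R M] [AddCommGroup M'] [Module R M']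

open Submodule

theorem IsAttachedPrime.of_surjective {q : Ideal R} {f : M →ₗ[R] M'} (hf : Function.Surjective f)
    (h : IsAttachedPrime R M' q) : IsAttachedPrime R M q := by
  obtain ⟨hq, N', hN'⟩ := h
  refine ⟨hq, N'.comap f, ?_⟩
  rw [← hN', annihilator_quotient, annihilator_quotient]
  ext a
  simp only [mem_colon, Set.mem_univ, forall_const, mem_comap, map_smul]
  exact ⟨fun h y => (hf y).elim fun x hx => hx ▸ h x, fun h x => h (f x)⟩

theorem isAttachedPrime_of_isSecondary_top [IsNoetherianRing R]
    (h : (⊤ : Submodule R M).IsSecondary) :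
    IsAttachedPrime R M (⊤ : Submodule R M).annihilator.radical := by
  set q := (⊤ : Submodule R M).annihilator.radical
  refine ⟨h.isPrime, q • ⊤, le_antisymm (fun b hb => ?_) fun a ha => ?_⟩
  · by_contra hbq
    rw [h.mem_radical_annihilator_iff, not_not] at hbq
    rw [annihilator_quotient, mem_colon] at hb
    have hq : q • (⊤ : Submodule R M) = ⊤ := by
      refine eq_top_iff.2 fun x _ => ?_
      obtain ⟨y, -, rfl⟩ := (mem_smul_pointwise_iff_exists _ _ _).1 (hbq.symm ▸ mem_top : x ∈ b • ⊤)
      exact hb y (Set.mem_univ y)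
    have hqk (k : ℕ) : q ^ k • (⊤ : Submodule R M) = ⊤ := by
      induction k with
      | zero => rw [pow_zero, Ideal.one_eq_top, top_smul]
      | succ k ih => rw [pow_succ, mul_smul, hq, ih]
    obtain ⟨k, hk⟩ := Ideal.exists_pow_le_of_le_radical_of_fg le_rfl (IsNoetherian.noetherian q)
    refine h.1 (eq_bot_iff.2 ?_)
    calc ⊤ = q ^ k • (⊤ : Submodule R M) := (hqk k).symm
      _ ≤ (⊤ : Submodule R M).annihilator • ⊤ := smul_mono_left hk
      _ = ⊥ := annihilator_smul ⊤
  · rw [annihilator_quotient, mem_colon]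
    exact fun x _ => smul_mem_smul ha mem_top

theorem isAttachedPrime_of_sup_eq_top [IsNoetherianRing R] {L N : Submodule R M}
    (hL : L.IsSecondary) (hLN : L ⊔ N = ⊤) (hN : N ≠ ⊤) :
    IsAttachedPrime R M L.annihilator.radical := by
  have hmap : L.map N.mkQ = ⊤ := (map_mkQ_eq_top N L).2 (by rwa [sup_comm])
  have : Nontrivial (M ⧸ N) := Submodule.Quotient.nontrivial_iff.2 hN
  have hne : L.map N.mkQ ≠ ⊥ := hmap ▸ top_ne_bot
  rw [← hL.radical_annihilator_map N.mkQ hne, hmap]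
  exact (isAttachedPrime_of_isSecondary_top (hmap ▸ hL.map N.mkQ hne)).of_surjective
    N.mkQ_surjective

end Attached

section Thread

variable {R M N : Type*} [CommRing R] [AddCommGroup M] [Module R M] [AddCommGroup N] [Module R N]
  {S : Submonoid R}

theorem IsArtinian.exists_forall_mem_of_directed [IsArtinian R M] {ι : Type*} [Nonempty ι]
    {A : ι → AffineSubspace R M} (hA : Directed (· ≥ ·) A) (hne : ∀ i, (A i : Set M).Nonempty) :
    ∃ x, ∀ i, x ∈ A i := by
  obtain ⟨_, ⟨i, rfl⟩, hmin⟩ :=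
    IsArtinian.set_has_minimal (Set.range fun i => (A i).direction) (Set.range_nonempty _)
  obtain ⟨x, hx⟩ := hne i
  refine ⟨x, fun j => ?_⟩
  obtain ⟨k, hik, hjk⟩ := hA i j
  have hdir : (A k).direction = (A i).direction :=
    (AffineSubspace.direction_le hik).eq_of_not_lt (hmin _ ⟨k, rfl⟩)
  exact hjk (AffineSubspace.eq_of_direction_eq_of_nonempty_of_le hdir (hne k) hik ▸ hx)

/-- A compatible family of nonempty cosets for the inverse system `(M, u • -)_{s ∈ S}` whose limit
is `Hom_R(S⁻¹R, M)`: a thread `m` with `m s ∈ Y s` gives the map `r / s ↦ r • m s`. -/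
def IsCosetSystem (Y : S → AffineSubspace R M) : Prop :=
  (∀ s, (Y s : Set M).Nonempty) ∧ ∀ s u, ∀ x ∈ Y (s * u), (u : R) • x ∈ Y s

theorem isCosetSystem_sInf [IsArtinian R M] {c : Set (S → AffineSubspace R M)}
    (hc : c ⊆ {Y | IsCosetSystem Y}) (hchain : IsChain (· ≤ ·) c) (hne : c.Nonempty) :
    IsCosetSystem (sInf c) := by
  have : Nonempty c := hne.to_subtype
  have mem_sInf (s : S) (x : M) : x ∈ sInf c s ↔ ∀ Y ∈ c, x ∈ Y s := by
    rw [sInf_apply, ← sInf_range, AffineSubspace.mem_sInf_iff, Set.forall_mem_range,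
      Subtype.forall]
  refine ⟨fun s => ?_, fun s u x hx => (mem_sInf s _).2 fun Y hY =>
    (hc hY).2 s u x ((mem_sInf _ x).1 hx Y hY)⟩
  obtain ⟨x, hx⟩ := IsArtinian.exists_forall_mem_of_directed (A := fun Y : c => Y.1 s)
    (fun Y Z => (hchain.total Y.2 Z.2).elim (fun h => ⟨Y, le_rfl, h s⟩) fun h => ⟨Z, h s, le_rfl⟩)
    fun Y => (hc Y.2).1 s
  exact ⟨x, (mem_sInf s x).2 fun Y hY => hx ⟨Y, hY⟩⟩

namespace IsCosetSystem

theorem exists_le_minimal [IsArtinian R M] {X : S → AffineSubspace R M} (hX : IsCosetSystem X) :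
    ∃ Y ≤ X, Minimal IsCosetSystem Y := by
  obtain ⟨Y, hYX, hY⟩ := zorn_le_nonempty₀ (α := (S → AffineSubspace R M)ᵒᵈ)
    {Y | IsCosetSystem (OrderDual.ofDual Y)}
    (fun c hc hchain Y hY => ⟨OrderDual.toDual (sInf (OrderDual.toDual ⁻¹' c)),
      isCosetSystem_sInf hc hchain.symm ⟨Y, hY⟩,
      fun _ hZ => sInf_le (α := S → AffineSubspace R M) hZ⟩)
    (OrderDual.toDual X) hX
  exact ⟨OrderDual.ofDual Y, hYX, minimal_toDual.1 hY⟩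

variable {Y : S → AffineSubspace R M}

/-- The key step: pick `y` in the stable image `⋂ u, u • Y (t * u)` (nonempty by linear
compactness) and keep only the elements of each `Y s` that are compatible with `y`. -/
theorem exists_le_subsingleton [IsArtinian R M] (hY : IsCosetSystem Y) (t : S) :
    ∃ Y' ≤ Y, IsCosetSystem Y' ∧ (Y' t : Set M).Subsingleton := by
  let A (u : S) := (Y (t * u)).map (LinearMap.lsmul R M u).toAffineMap
  have mem_A (u : S) (x : M) : x ∈ A u ↔ ∃ z ∈ Y (t * u), (u : R) • z = x := by
    simp [A, AffineSubspace.mem_map]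
  have hA : Directed (· ≥ ·) A := fun u v => by
    refine ⟨u * v, fun x hx => ?_, fun x hx => ?_⟩ <;> obtain ⟨z, hz, rfl⟩ := (mem_A _ x).1 hx
    · refine (mem_A u _).2 ⟨(v : R) • z, hY.2 _ v z (by rwa [← mul_assoc] at hz), ?_⟩
      rw [Submonoid.coe_mul, mul_smul]
    · refine (mem_A v _).2
        ⟨(u : R) • z, hY.2 _ u z (by rwa [mul_comm u v, ← mul_assoc] at hz), ?_⟩
      rw [Submonoid.coe_mul, mul_comm, mul_smul]
  obtain ⟨y, hy⟩ := IsArtinian.exists_forall_mem_of_directed hA fun u =>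
    (hY.1 (t * u)).elim fun z hz => ⟨_, (mem_A u _).2 ⟨z, hz, rfl⟩⟩
  let Y' (s : S) := ((Y (s * t)) ⊓ (affineSpan R {y}).comap
      (LinearMap.lsmul R M s).toAffineMap).map (LinearMap.lsmul R M t).toAffineMap
  have mem_Y' (s : S) (x : M) :
      x ∈ Y' s ↔ ∃ z ∈ Y (s * t), (s : R) • z = y ∧ (t : R) • z = x := by
    simp [Y', AffineSubspace.mem_map, AffineSubspace.mem_inf_iff, AffineSubspace.mem_comap,
      AffineSubspace.mem_affineSpan_singleton, and_assoc]
  refine ⟨Y', fun s x hx => ?_, ⟨fun s => ?_, fun s u x hx => ?_⟩, fun x hx x' hx' => ?_⟩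
  · obtain ⟨z, hz, -, rfl⟩ := (mem_Y' s x).1 hx
    exact hY.2 s t z hz
  · obtain ⟨z, hz, hzy⟩ := (mem_A s y).1 (hy s)
    exact ⟨_, (mem_Y' s _).2 ⟨z, by rwa [mul_comm], hzy, rfl⟩⟩
  · obtain ⟨z, hz, hzy, rfl⟩ := (mem_Y' _ x).1 hx
    refine (mem_Y' s _).2 ⟨(u : R) • z, hY.2 _ u z (by rwa [mul_right_comm] at hz), ?_, ?_⟩
    · rw [← hzy, Submonoid.coe_mul, mul_smul]
    · rw [smul_comm]
  · obtain ⟨z, -, hzy, rfl⟩ := (mem_Y' t x).1 hx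
    obtain ⟨z', -, hzy', rfl⟩ := (mem_Y' t x').1 hx'
    exact hzy.trans hzy'.symm

theorem exists_thread_of_minimal [IsArtinian R M] (hY : Minimal IsCosetSystem Y) :
    ∃ m : S → M, (∀ s, m s ∈ Y s) ∧ ∀ s u : S, (u : R) • m (s * u) = m s := by
  have (t : S) : ∃ y ∈ Y t, (Y t : Set M).Subsingleton := by
    obtain ⟨Y', hY'Y, hY', hsub⟩ := hY.1.exists_le_subsingleton t
    obtain ⟨y, hy⟩ := hY.1.1 t
    exact ⟨y, hy, hsub.anti (hY.2 hY' hY'Y t)⟩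
  choose m hm hsub using this
  exact ⟨m, hm, fun s u => hsub s (hY.1.2 s u _ (hm (s * u))) (hm s)⟩

end IsCosetSystem

noncomputable def linearMapOfThread (m : S → M) (hm : ∀ s u : S, (u : R) • m (s * u) = m s) :
    Localization S →ₗ[R] M where
  toFun z := z.liftOn (fun r s => r • m s) fun {a c b d} h => by
    obtain ⟨e, he⟩ := Localization.r_iff_exists.1 h
    rw [← hm b (d * e), ← hm d (b * e), mul_left_comm b d e, smul_smul, smul_smul]
    congr 1
    simp only [Submonoid.coe_mul]
    linear_combination he
  map_add' x y := Localization.induction_on₂ x y fun ⟨a, b⟩ ⟨c, d⟩ => by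
    simp only [Localization.add_mk, Localization.liftOn_mk]
    rw [add_smul, mul_smul, mul_smul, ← hm d b, ← hm b d, mul_comm d b, smul_comm (b : R) c,
      add_comm, smul_comm (d : R) a]
  map_smul' r x := Localization.induction_on x fun ⟨a, b⟩ => by
    simp only [Localization.smul_mk, Localization.liftOn_mk, smul_eq_mul, mul_smul,
      RingHom.id_apply]

theorem linearMapOfThread_mk (m : S → M) (hm : ∀ s u : S, (u : R) • m (s * u) = m s) (r : R)
    (s : S) : linearMapOfThread m hm (Localization.mk r s) = r • m s :=
  rfl

theorem IsArtinian.exists_linearMap_localization_mem [IsArtinian R M] {X : S → AffineSubspace R M}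
    (hX : IsCosetSystem X) : ∃ f : Localization S →ₗ[R] M, ∀ s, f (Localization.mk 1 s) ∈ X s := by
  obtain ⟨Y, hYX, hY⟩ := hX.exists_le_minimal
  obtain ⟨m, hmY, hm⟩ := IsCosetSystem.exists_thread_of_minimal hY
  exact ⟨linearMapOfThread m hm, fun s => by
    rw [linearMapOfThread_mk, one_smul]; exact hYX s (hmY s)⟩

theorem Localization.mk_mul_right_eq (u s : S) :
    Localization.mk (u : R) (s * u) = Localization.mk 1 s :=
  Localization.mk_eq_mk_iff.2 <| Localization.r_iff_exists.2 ⟨1, by simp [mul_comm]⟩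

theorem Localization.linearMap_ext {f g : Localization S →ₗ[R] M}
    (h : ∀ s, f (Localization.mk 1 s) = g (Localization.mk 1 s)) : f = g :=
  LinearMap.ext fun z => Localization.induction_on z fun ⟨r, s⟩ => by
    have hrs : Localization.mk r s = r • Localization.mk 1 s := by
      rw [Localization.smul_mk, smul_eq_mul, mul_one]
    simp only [hrs, map_smul, h]

theorem IsArtinian.exists_localization_lift [IsArtinian R M] {π : M →ₗ[R] N}
    (hπ : Function.Surjective π) (g : Localization S →ₗ[R] N) :
    ∃ f : Localization S →ₗ[R] M, π ∘ₗ f = g := by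
  let X (s : S) := (affineSpan R {g (Localization.mk 1 s)}).comap π.toAffineMap
  have mem_X (s : S) (x : M) : x ∈ X s ↔ π x = g (Localization.mk 1 s) := by
    simp [X, AffineSubspace.mem_comap, AffineSubspace.mem_affineSpan_singleton]
  have hX : IsCosetSystem X := by
    refine ⟨fun s => (hπ _).imp fun x hx => (mem_X s x).2 hx, fun s u x hx => (mem_X s _).2 ?_⟩
    rw [map_smul, (mem_X _ x).1 hx, ← map_smul, Localization.smul_mk, smul_eq_mul, mul_one,
      Localization.mk_mul_right_eq]
  obtain ⟨f, hf⟩ := IsArtinian.exists_linearMap_localization_mem hX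
  exact ⟨f, Localization.linearMap_ext fun s => (mem_X s _).1 (hf s)⟩

theorem IsArtinian.exists_localization_map_one_eq [IsArtinian R M]
    (hS : ∀ s : S, Function.Surjective ((s : R) • · : M → M)) (x : M) :
    ∃ f : Localization S →ₗ[R] M, f 1 = x := by
  let X (s : S) := (affineSpan R {x}).comap (LinearMap.lsmul R M s).toAffineMap
  have mem_X (s : S) (y : M) : y ∈ X s ↔ (s : R) • y = x := by
    simp [X, AffineSubspace.mem_comap, AffineSubspace.mem_affineSpan_singleton]
  have hX : IsCosetSystem X := by
    refine ⟨fun s => (hS s x).imp fun y hy => (mem_X s y).2 hy, fun s u y hy => (mem_X s _).2 ?_⟩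
    rw [← (mem_X _ y).1 hy, smul_smul, Submonoid.coe_mul, mul_comm]
  obtain ⟨f, hf⟩ := IsArtinian.exists_linearMap_localization_mem hX
  refine ⟨f, ?_⟩
  rw [← Localization.mk_one, ← one_smul R (f _)]
  exact (mem_X 1 _).1 (hf 1)

end Thread

section Colocalization

open Submodule

variable {R M : Type*} [CommRing R] [AddCommGroup M] [Module R M]

def Submodule.colocalization (L : Submodule R M) (p : Ideal R) [p.IsPrime] :
    Submodule (Localization.AtPrime p) (Localization.AtPrime p →ₗ[R] M) where
  carrier := {f | ∀ y, f y ∈ L}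
  add_mem' hf hg y := L.add_mem (hf y) (hg y)
  zero_mem' _ := L.zero_mem
  smul_mem' α _ hf y := hf (α * y)

variable (p : Ideal R) [p.IsPrime]

theorem colocalization_smul_apply (α : Localization.AtPrime p)
    (f : Localization.AtPrime p →ₗ[R] M) (y : Localization.AtPrime p) : (α • f) y = f (α * y) :=
  rfl

theorem colocalization_algebraMap_smul_apply (a : R) (f : Localization.AtPrime p →ₗ[R] M)
    (y : Localization.AtPrime p) : (algebraMap R (Localization.AtPrime p) a • f) y = a • f y := by
  rw [colocalization_smul_apply, ← Algebra.smul_def, map_smul]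

variable {L : Submodule R M}

theorem Submodule.colocalization_bot : (⊥ : Submodule R M).colocalization p = ⊥ :=
  eq_bot_iff.2 fun _ hf => (mem_bot _).2 (LinearMap.ext fun y => (mem_bot R).1 (hf y))

theorem Submodule.colocalization_top : (⊤ : Submodule R M).colocalization p = ⊤ :=
  eq_top_iff.2 fun _ _ _ => mem_top

theorem Submodule.colocalization_mono {A B : Submodule R M} (h : A ≤ B) :
    A.colocalization p ≤ B.colocalization p :=
  fun _ hf y => h (hf y)

theorem Submodule.colocalization_sup [IsArtinian R M] (A B : Submodule R M) :
    (A ⊔ B).colocalization p = A.colocalization p ⊔ B.colocalization p := by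
  refine le_antisymm (fun f hf => ?_)
    (sup_le (colocalization_mono p le_sup_left) (colocalization_mono p le_sup_right))
  let φ := A.subtype.coprod B.subtype
  have hf' (y : Localization.AtPrime p) : f y ∈ LinearMap.range φ := by
    rw [LinearMap.range_coprod, range_subtype, range_subtype]
    exact hf y
  obtain ⟨g, hg⟩ := IsArtinian.exists_localization_lift (S := p.primeCompl)
    φ.surjective_rangeRestrict (LinearMap.codRestrict _ f hf')
  have hfg : f = A.subtype ∘ₗ LinearMap.fst R A B ∘ₗ g + B.subtype ∘ₗ LinearMap.snd R A B ∘ₗ g :=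
    LinearMap.ext fun y => congrArg Subtype.val (LinearMap.congr_fun hg y).symm
  rw [hfg]
  exact add_mem_sup (fun y => (g y).1.2) fun y => (g y).2.2

theorem Submodule.colocalization_finset_sup [IsArtinian R M] {ι : Type*} (s : Finset ι)
    (L : ι → Submodule R M) :
    (s.sup L).colocalization p = s.sup fun i => (L i).colocalization p :=
  Finset.apply_sup_eq_sup_comp (colocalization · p) (colocalization_sup p) (colocalization_bot p)

theorem Submodule.map_annihilator_le_annihilator_colocalization :
    L.annihilator.map (algebraMap R (Localization.AtPrime p)) ≤
      (L.colocalization p).annihilator :=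
  Ideal.map_le_iff_le_comap.2 fun a ha => mem_annihilator.2 fun f hf => LinearMap.ext fun y => by
    rw [colocalization_algebraMap_smul_apply, mem_annihilator.1 ha _ (hf y), LinearMap.zero_apply]

theorem Submodule.colocalization_eq_bot_of_not_le (h : ¬L.annihilator.radical ≤ p) :
    L.colocalization p = ⊥ := by
  obtain ⟨t, ⟨n, hn⟩, htp⟩ := SetLike.not_le_iff_exists.1 h
  obtain ⟨v, hv⟩ := IsLocalization.map_units (Localization.AtPrime p)
    (⟨t ^ n, fun h => htp (‹p.IsPrime›.mem_of_pow_mem n h)⟩ : p.primeCompl)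
  refine eq_bot_iff.2 fun f hf => (mem_bot _).2 (LinearMap.ext fun y => ?_)
  calc f y = (algebraMap R (Localization.AtPrime p) (t ^ n) • f) (↑v⁻¹ * y) := by
        rw [colocalization_smul_apply, ← hv, Units.mul_inv_cancel_left]
    _ = 0 := by rw [colocalization_algebraMap_smul_apply, mem_annihilator.1 hn _ (hf _)]

theorem Submodule.exists_algebraMap_smul_eq [IsArtinian R M] {a : R} (h : a • L = L)
    {f : Localization.AtPrime p →ₗ[R] M} (hf : f ∈ L.colocalization p) :
    ∃ g ∈ L.colocalization p, algebraMap R (Localization.AtPrime p) a • g = f := by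
  have hπ : Function.Surjective (LinearMap.lsmul R L a) := fun y => by
    obtain ⟨z, hz, hzy⟩ := (mem_smul_pointwise_iff_exists _ _ _).1 (h.symm ▸ y.2 : (y : M) ∈ a • L)
    exact ⟨⟨z, hz⟩, Subtype.ext hzy⟩
  obtain ⟨g, hg⟩ :=
    IsArtinian.exists_localization_lift (S := p.primeCompl) hπ (LinearMap.codRestrict L f hf)
  refine ⟨L.subtype ∘ₗ g, fun y => (g y).2, LinearMap.ext fun y => ?_⟩
  rw [colocalization_algebraMap_smul_apply]
  exact congrArg Subtype.val (LinearMap.congr_fun hg y)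

theorem Submodule.IsSecondary.exists_mem_colocalization_apply_one [IsArtinian R M]
    (hL : L.IsSecondary) (hp : L.annihilator.radical ≤ p) {x : M} (hx : x ∈ L) :
    ∃ f ∈ L.colocalization p, f 1 = x := by
  have hS (s : p.primeCompl) : Function.Surjective ((s : R) • · : L → L) := fun y => by
    have hs : (s : R) • L = L := (hL.2 s).resolve_right fun h => s.2 (hp h)
    obtain ⟨z, hz, hzy⟩ :=
      (mem_smul_pointwise_iff_exists _ _ _).1 (hs.symm ▸ y.2 : (y : M) ∈ (s : R) • L)
    exact ⟨⟨z, hz⟩, Subtype.ext hzy⟩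
  obtain ⟨g, hg⟩ := IsArtinian.exists_localization_map_one_eq hS ⟨x, hx⟩
  exact ⟨L.subtype ∘ₗ g, fun y => (g y).2, congrArg Subtype.val hg⟩

theorem Submodule.IsSecondary.colocalization [IsArtinian R M] (hL : L.IsSecondary)
    (hp : L.annihilator.radical ≤ p) :
    (L.colocalization p).IsSecondary ∧ (L.colocalization p).annihilator.radical =
      L.annihilator.radical.map (algebraMap R (Localization.AtPrime p)) := by
  set q := L.annihilator.radical
  have hsurj (a : R) (ha : a ∉ q) (s : p.primeCompl) :
      IsLocalization.mk' (Localization.AtPrime p) a s • L.colocalization p =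
        L.colocalization p := by
    refine le_antisymm (smul_le_self_of_tower _ _) fun f hf => ?_
    obtain ⟨g, hg, rfl⟩ := exists_algebraMap_smul_eq p ((hL.2 a).resolve_right ha) hf
    refine (mem_smul_pointwise_iff_exists _ _ _).2
      ⟨algebraMap R (Localization.AtPrime p) s • g, smul_mem _ _ hg, ?_⟩
    rw [smul_smul, IsLocalization.mk'_spec]
  have hmap : q.map (algebraMap R (Localization.AtPrime p)) ≤
      (L.colocalization p).annihilator.radical :=
    (Ideal.map_radical_le _).trans
      (Ideal.radical_mono (map_annihilator_le_annihilator_colocalization p))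
  have hne : L.colocalization p ≠ ⊥ := by
    obtain ⟨x, hx, hx0⟩ := exists_mem_ne_zero_of_ne_bot hL.1
    obtain ⟨f, hf, rfl⟩ := hL.exists_mem_colocalization_apply_one p hp hx
    intro h
    have hf0 : f = 0 := (mem_bot _).1 (h ▸ hf)
    exact hx0 (by rw [hf0, LinearMap.zero_apply])
  have hmk' (a : R) (s : p.primeCompl) (ha : a ∈ q) :
      IsLocalization.mk' (Localization.AtPrime p) a s ∈ q.map (algebraMap R _) :=
    (IsLocalization.mk'_mem_map_algebraMap_iff _ _ q a s).2 ⟨1, one_mem _, by rwa [one_mul]⟩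
  have hsec : (L.colocalization p).IsSecondary := by
    refine ⟨hne, fun α => ?_⟩
    obtain ⟨⟨a, s⟩, rfl⟩ := IsLocalization.mk'_surjective p.primeCompl α
    by_cases ha : a ∈ q
    · exact .inr (hmap (hmk' a s ha))
    · exact .inl (hsurj a ha s)
  refine ⟨hsec, le_antisymm (fun α hα => ?_) hmap⟩
  obtain ⟨⟨a, s⟩, rfl⟩ := IsLocalization.mk'_surjective p.primeCompl α
  by_contra h
  exact hsec.mem_radical_annihilator_iff.1 hα (hsurj a (fun ha => h (hmk' a s ha)) s)

end Colocalization

section Main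

open Submodule

variable {R M : Type*} [CommRing R] [AddCommGroup M] [Module R M] (p : Ideal R) [p.IsPrime]

theorem Submodule.map_annihilator_quotient_le (N : Submodule R M) :
    (Module.annihilator R (M ⧸ N)).map (algebraMap R (Localization.AtPrime p)) ≤
      Module.annihilator (Localization.AtPrime p)
        ((Localization.AtPrime p →ₗ[R] M) ⧸ N.colocalization p) := by
  refine Ideal.map_le_iff_le_comap.2 fun a ha => ?_
  rw [annihilator_quotient, mem_colon] at ha
  rw [Ideal.mem_comap, annihilator_quotient, mem_colon]
  exact fun f _ y => by
    rw [colocalization_algebraMap_smul_apply]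
    exact ha _ (Set.mem_univ _)

theorem IsAttachedPrime.colocalization [IsArtinian R M] {q : Ideal R}
    (hq : IsAttachedPrime R M q) (hqp : q ≤ p) :
    IsAttachedPrime (Localization.AtPrime p) (Localization.AtPrime p →ₗ[R] M)
      (q.map (algebraMap R (Localization.AtPrime p))) := by
  obtain ⟨hq, N, rfl⟩ := hq
  obtain ⟨L, hL, hLN, hLq⟩ := exists_isSecondary_radical_annihilator_eq hq
  obtain ⟨hH, hHq⟩ := hL.colocalization p (hLq ▸ hqp)
  refine ⟨IsLocalization.isPrime_of_isPrime_disjoint p.primeCompl _ _ hq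
      (Set.disjoint_left.2 fun a ha haq => ha (hqp haq)), N.colocalization p,
    le_antisymm ?_ (map_annihilator_quotient_le p N)⟩
  let K := (L.colocalization p).map (N.colocalization p).mkQ
  have hK : K ≠ ⊥ := by
    obtain ⟨x, hxL, hxN⟩ := SetLike.not_le_iff_exists.1 hLN
    obtain ⟨f, hf, rfl⟩ := hL.exists_mem_colocalization_apply_one p (hLq ▸ hqp) hxL
    rw [Ne, eq_bot_iff, map_le_iff_le_comap, comap_bot, ker_mkQ]
    exact fun h => hxN (h hf 1)
  calc Module.annihilator _ _ = (⊤ : Submodule _ (_ ⧸ N.colocalization p)).annihilator :=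
        annihilator_top.symm
    _ ≤ K.annihilator := annihilator_mono le_top
    _ ≤ K.annihilator.radical := Ideal.le_radical
    _ = _ := by rw [hH.radical_annihilator_map _ hK, hHq, hLq]

theorem IsAttachedPrime.exists_eq_map_of_colocalization [IsNoetherianRing R] [IsArtinian R M]
    {P : Ideal (Localization.AtPrime p)}
    (hP : IsAttachedPrime (Localization.AtPrime p) (Localization.AtPrime p →ₗ[R] M) P) :
    ∃ q : Ideal R, IsAttachedPrime R M q ∧ q ≤ p ∧
      P = q.map (algebraMap R (Localization.AtPrime p)) := by
  classical
  obtain ⟨hP, N', rfl⟩ := hP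
  obtain ⟨s, hs, hsec, hirr⟩ :=
    exists_irredundant_isSecondary_finset_sup_eq (⊤ : Submodule R M)
  let K (L : Submodule R M) := (L.colocalization p).map N'.mkQ
  have hK : s.sup K = ⊤ := calc
    s.sup K = (s.sup fun L => L.colocalization p).map N'.mkQ :=
      (Finset.apply_sup_eq_sup_comp _ (fun _ _ => Submodule.map_sup _ _ _) (map_bot _)).symm
    _ = ((s.sup id).colocalization p).map N'.mkQ := by rw [colocalization_finset_sup]; rfl
    _ = ⊤ := by rw [hs, colocalization_top, Submodule.map_top, range_mkQ]
  obtain ⟨L, hLs, hLP⟩ := exists_annihilator_eq_of_finset_sup_eq_top hK hP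
  have hne : K L ≠ ⊥ := fun h => hP.ne_top (by rw [← hLP, h, annihilator_bot])
  have hLp : L.annihilator.radical ≤ p := by
    by_contra h
    apply hne
    change (L.colocalization p).map N'.mkQ = ⊥
    rw [colocalization_eq_bot_of_not_le p h, Submodule.map_bot]
  obtain ⟨hH, hHq⟩ := (hsec L hLs).colocalization p hLp
  refine ⟨_, isAttachedPrime_of_sup_eq_top (hsec L hLs) (N := (s.erase L).sup id) ?_ (hirr L hLs),
    hLp, ?_⟩
  · have := Finset.sup_insert (f := id) (s := s.erase L) (b := L)
    rwa [Finset.insert_erase hLs, hs, eq_comm] at this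
  · rw [← hLP, ← (hLP.symm ▸ hP : (K L).annihilator.IsPrime).radical,
      hH.radical_annihilator_map _ hne, hHq]

end Main

/-- Let `R` be a Noetherian ring and `M` an Artinian `R`-module. For any
prime `p`, the attached primes of the co-localization `Hom_R(R_p, M)` as an `R_p`-module are
exactly the ideals `q R_p` for `q` an attached prime of `M` contained in `p`. -/
theorem attachedPrimes_colocalization
    (R M : Type*) [CommRing R] [IsNoetherianRing R]
    [AddCommGroup M] [Module R M] [IsArtinian R M]
    (p : Ideal R) [hp : p.IsPrime] :
    {P : Ideal (Localization.AtPrime p) |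
        IsAttachedPrime (Localization.AtPrime p) (Localization.AtPrime p →ₗ[R] M) P}
      = {P : Ideal (Localization.AtPrime p) | ∃ q : Ideal R,
          IsAttachedPrime R M q ∧ q ≤ p ∧
            P = q.map (algebraMap R (Localization.AtPrime p))} := by
  ext P
  exact ⟨fun hP => hP.exists_eq_map_of_colocalization p,
    fun ⟨q, hq, hqp, hP⟩ => hP ▸ hq.colocalization p hqp⟩
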